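/- (Tweedie's formula for correlated Gaussian noise.) Let μ be a probability measure on ℝⁿ with finite first moment, let Σ be a symmetric positive definite n×n real matrix, and let g_Σ(x) = (2π)^{−n/2} det(Σ)^{−1/2} exp(−½ xᵀΣ⁻¹x) be the N(0, Σ) density. Define p(y) = ∫ g_Σ(y − h) dμ(h) and, where p(y) > 0, m(y) = (∫ h g_Σ(y − h) dμ(h)) / p(y). Then at every y with p(y) > 0, m(y) = y + Σ ∇_y log p(y). -/

import Mathlib

open MeasureTheory Real

/-- The correlated Gaussian density
`g_Σ(x) = (2π)^{-n/2} det(Σ)^{-1/2} exp(-½ xᵀ Σ⁻¹ x)` of `N(0, Σ)` on ℝⁿ. -/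
noncomputable def gaussDensityCov (n : ℕ) (S : Matrix (Fin n) (Fin n) ℝ)
    (x : EuclideanSpace ℝ (Fin n)) : ℝ :=
  (2 * π) ^ (-(n : ℝ) / 2) * S.det ^ (-(1 : ℝ) / 2) *
    Real.exp (-(1 / 2) * ∑ i, ∑ j, x i * S⁻¹ i j * x j)

variable {n : ℕ}

lemma clm_apply (A : Matrix (Fin n) (Fin n) ℝ) (x : EuclideanSpace ℝ (Fin n)) (i : Fin n) :
    (Matrix.toEuclideanCLM (𝕜 := ℝ) A) x i = ∑ j, A i j * x j := by
  have h2 : (Matrix.toEuclideanCLM (𝕜 := ℝ) A) x i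
      = Matrix.toLin' A (WithLp.equiv _ _ x) i := by
    rw [Matrix.ofLp_toEuclideanCLM (𝕜 := ℝ) A x]; rfl
  rw [h2, Matrix.toLin'_apply]
  simp [Matrix.mulVec, dotProduct]

lemma quad_nonneg {S : Matrix (Fin n) (Fin n) ℝ} (hS : S.PosDef) (x : EuclideanSpace ℝ (Fin n)) :
    0 ≤ ∑ i, ∑ j, x i * S⁻¹ i j * x j := by
  have h := hS.inv.posSemidef.dotProduct_mulVec_nonneg (fun i => x i)
  simpa [dotProduct, Matrix.mulVec, Finset.mul_sum, mul_assoc] using h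

lemma const_pos {S : Matrix (Fin n) (Fin n) ℝ} (hS : S.PosDef) :
    0 < (2 * π) ^ (-(n : ℝ) / 2) * S.det ^ (-(1 : ℝ) / 2) :=
  mul_pos (rpow_pos_of_pos (by positivity) _) (rpow_pos_of_pos hS.det_pos _)

lemma gauss_pos {S : Matrix (Fin n) (Fin n) ℝ} (hS : S.PosDef) (x : EuclideanSpace ℝ (Fin n)) :
    0 < gaussDensityCov n S x :=
  mul_pos (const_pos hS) (Real.exp_pos _)

lemma gauss_le {S : Matrix (Fin n) (Fin n) ℝ} (hS : S.PosDef) (x : EuclideanSpace ℝ (Fin n)) :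
    gaussDensityCov n S x ≤ (2 * π) ^ (-(n : ℝ) / 2) * S.det ^ (-(1 : ℝ) / 2) := by
  have h1 : Real.exp (-(1 / 2) * ∑ i, ∑ j, x i * S⁻¹ i j * x j) ≤ 1 := by
    rw [Real.exp_le_one_iff]
    have := quad_nonneg hS x
    nlinarith
  calc gaussDensityCov n S x ≤ (2 * π) ^ (-(n : ℝ) / 2) * S.det ^ (-(1 : ℝ) / 2) * 1 :=
        mul_le_mul_of_nonneg_left h1 (const_pos hS).le
    _ = _ := mul_one _

lemma gauss_continuous (S : Matrix (Fin n) (Fin n) ℝ) : Continuous (gaussDensityCov n S) := by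
  unfold gaussDensityCov
  refine continuous_const.mul (Real.continuous_exp.comp (continuous_const.mul ?_))
  refine continuous_finset_sum _ fun i _ => continuous_finset_sum _ fun j _ => ?_
  exact ((EuclideanSpace.proj i).continuous.mul continuous_const).mul
    (EuclideanSpace.proj j).continuous

noncomputable def gaussGrad (n : ℕ) (S : Matrix (Fin n) (Fin n) ℝ)
    (x : EuclideanSpace ℝ (Fin n)) : EuclideanSpace ℝ (Fin n) :=
  (-(gaussDensityCov n S x)) • ((Matrix.toEuclideanCLM (𝕜 := ℝ) S⁻¹) x)

lemma gaussGrad_continuous (S : Matrix (Fin n) (Fin n) ℝ) : Continuous (gaussGrad n S) :=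
  ((gauss_continuous S).neg).smul (Matrix.toEuclideanCLM (𝕜 := ℝ) S⁻¹).continuous

lemma gaussGrad_norm_le {S : Matrix (Fin n) (Fin n) ℝ} (hS : S.PosDef)
    (x : EuclideanSpace ℝ (Fin n)) :
    ‖gaussGrad n S x‖ ≤ (2 * π) ^ (-(n : ℝ) / 2) * S.det ^ (-(1 : ℝ) / 2) *
      ‖(Matrix.toEuclideanCLM (𝕜 := ℝ) S⁻¹ : EuclideanSpace ℝ (Fin n) →L[ℝ] _)‖ * ‖x‖ := by
  rw [gaussGrad, norm_smul]
  have h1 : ‖-(gaussDensityCov n S x)‖ ≤ (2 * π) ^ (-(n : ℝ) / 2) * S.det ^ (-(1 : ℝ) / 2) := by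
    rw [norm_neg, Real.norm_eq_abs, abs_of_pos (gauss_pos hS x)]
    exact gauss_le hS x
  have h2 := (Matrix.toEuclideanCLM (𝕜 := ℝ) S⁻¹).le_opNorm x
  calc ‖-(gaussDensityCov n S x)‖ * ‖(Matrix.toEuclideanCLM (𝕜 := ℝ) S⁻¹) x‖
      ≤ ((2 * π) ^ (-(n : ℝ) / 2) * S.det ^ (-(1 : ℝ) / 2)) *
        (‖(Matrix.toEuclideanCLM (𝕜 := ℝ) S⁻¹ : EuclideanSpace ℝ (Fin n) →L[ℝ] _)‖ * ‖x‖) := by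
        apply mul_le_mul h1 h2 (norm_nonneg _) (const_pos hS).le
    _ = _ := by ring

lemma gauss_hasFDerivAt {S : Matrix (Fin n) (Fin n) ℝ} (hS : S.PosDef)
    (x : EuclideanSpace ℝ (Fin n)) :
    HasFDerivAt (gaussDensityCov n S)
      (InnerProductSpace.toDual ℝ (EuclideanSpace ℝ (Fin n)) (gaussGrad n S x)) x := by
  classical
  set A := S⁻¹ with hA
  have hAsym : ∀ i j, A i j = A j i := fun i j => by
    simpa using (hS.1.inv.apply i j).symm
  have hq : HasFDerivAt (fun x : EuclideanSpace ℝ (Fin n) =>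
      ∑ i, ∑ j, (EuclideanSpace.proj i : EuclideanSpace ℝ (Fin n) →L[ℝ] ℝ) x * A i j *
        (EuclideanSpace.proj j : EuclideanSpace ℝ (Fin n) →L[ℝ] ℝ) x)
      (∑ i : Fin n, ∑ j : Fin n,
        ((x i * A i j) • (EuclideanSpace.proj j : EuclideanSpace ℝ (Fin n) →L[ℝ] ℝ)
          + (x j) • (A i j • (EuclideanSpace.proj i : EuclideanSpace ℝ (Fin n) →L[ℝ] ℝ)))) x := by
    refine HasFDerivAt.fun_sum fun i _ => ?_
    refine HasFDerivAt.fun_sum fun j _ => ?_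
    have h1 := (EuclideanSpace.proj (𝕜 := ℝ) i).hasFDerivAt (x := x)
    have h2 := (EuclideanSpace.proj (𝕜 := ℝ) j).hasFDerivAt (x := x)
    have h3 := (h1.mul_const (A i j)).mul h2
    simpa [smul_smul, mul_comm, Pi.mul_def] using h3
  have hexp := ((hq.const_mul (-(1/2) : ℝ)).exp).const_mul
    ((2 * π) ^ (-(n : ℝ) / 2) * S.det ^ (-(1 : ℝ) / 2))
  have heq : gaussDensityCov n S = fun x : EuclideanSpace ℝ (Fin n) =>
      (2 * π) ^ (-(n : ℝ) / 2) * S.det ^ (-(1 : ℝ) / 2) *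
        Real.exp (-(1 / 2) * ∑ i, ∑ j,
          (EuclideanSpace.proj i : EuclideanSpace ℝ (Fin n) →L[ℝ] ℝ) x * A i j *
          (EuclideanSpace.proj j : EuclideanSpace ℝ (Fin n) →L[ℝ] ℝ) x) := rfl
  rw [heq]
  refine hexp.congr_fderiv ?_
  ext w
  have hinner : ((InnerProductSpace.toDual ℝ (EuclideanSpace ℝ (Fin n)) (gaussGrad n S x)) w : ℝ)
      = (-(gaussDensityCov n S x)) * ∑ i, (∑ j, A i j * x j) * w i := by
    rw [InnerProductSpace.toDual_apply_apply]
    have hin : (inner ℝ ((Matrix.toEuclideanCLM (𝕜 := ℝ) A) x) w : ℝ)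
        = ∑ i, (∑ j, A i j * x j) * w i := by
      rw [PiLp.inner_apply]
      refine Finset.sum_congr rfl fun i _ => ?_
      rw [clm_apply]
      simp [mul_comm]
    simp only [gaussGrad, real_inner_smul_left]
    rw [hin]
  rw [hinner, eq_comm]
  simp only [ContinuousLinearMap.smul_apply, ContinuousLinearMap.sum_apply,
    ContinuousLinearMap.add_apply, PiLp.proj_apply, smul_eq_mul, ContinuousLinearMap.coe_smul',
    Pi.smul_apply]
  set S1 := ∑ i : Fin n, ∑ j : Fin n, x i * A i j * w j with hS1def
  set S2 := ∑ i : Fin n, ∑ j : Fin n, x j * (A i j * w i) with hS2def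
  have hS12 : S1 = S2 := by
    rw [hS1def, Finset.sum_comm]
    refine Finset.sum_congr rfl fun i _ => Finset.sum_congr rfl fun j _ => ?_
    rw [hAsym j i]; ring
  have hS2' : S2 = ∑ i, (∑ j, A i j * x j) * w i := by
    refine Finset.sum_congr rfl fun i _ => ?_
    rw [Finset.sum_mul]
    exact Finset.sum_congr rfl fun j _ => by ring
  have hsum : ∑ i : Fin n, ∑ j : Fin n, (x i * A i j * w j + x j * (A i j * w i)) = S1 + S2 := by
    rw [hS1def, hS2def, ← Finset.sum_add_distrib]
    refine Finset.sum_congr rfl fun i _ => ?_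
    rw [← Finset.sum_add_distrib]
  have hgx : gaussDensityCov n S x = (2 * π) ^ (-(n : ℝ) / 2) * S.det ^ (-(1 : ℝ) / 2) *
      Real.exp (-(1 / 2) * ∑ i, ∑ j, x i * A i j * x j) := rfl
  rw [hsum, hS12, hgx, ← hS2']
  ring

/-- Tweedie's formula for correlated Gaussian noise: for a symmetric positive definite
covariance `Σ`, at every `y` with `p(y) > 0` the posterior mean satisfies
`m(y) = y + Σ ∇_y log p(y)` (stated componentwise). -/
theorem tweedie_formula_correlated (n : ℕ) (S : Matrix (Fin n) (Fin n) ℝ) (hS : S.PosDef)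
    (μ : Measure (EuclideanSpace ℝ (Fin n))) [IsProbabilityMeasure μ]
    (hmom : Integrable (fun h => ‖h‖) μ) (y : EuclideanSpace ℝ (Fin n))
    (hpy : 0 < ∫ h, gaussDensityCov n S (y - h) ∂μ) :
    ∀ i : Fin n,
      ((∫ h, gaussDensityCov n S (y - h) ∂μ)⁻¹ •
        (∫ h, gaussDensityCov n S (y - h) • h ∂μ)) i =
      y i + ∑ j, S i j *
        (((∫ h, gaussDensityCov n S (y - h) ∂μ)⁻¹ •
          gradient (fun y' => ∫ h, gaussDensityCov n S (y' - h) ∂μ) y) j) := by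
  classical
  intro i
  set g := gaussDensityCov n S with hgdef
  set c := (2 * π) ^ (-(n : ℝ) / 2) * S.det ^ (-(1 : ℝ) / 2) with hcdef
  have hc : 0 < c := const_pos hS
  set L := (Matrix.toEuclideanCLM (𝕜 := ℝ) S⁻¹ : (EuclideanSpace ℝ (Fin n)) →L[ℝ] (EuclideanSpace ℝ (Fin n))) with hLdef
  have contg : Continuous g := gauss_continuous S
  have contsub : ∀ y' : (EuclideanSpace ℝ (Fin n)), Continuous (fun h : (EuclideanSpace ℝ (Fin n)) => y' - h) :=
    fun y' => continuous_const.sub continuous_id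
  -- integrability of the density slices
  have int_g : ∀ y' : (EuclideanSpace ℝ (Fin n)), Integrable (fun h => g (y' - h)) μ := by
    intro y'
    refine Integrable.mono' (integrable_const c)
      ((contg.comp (contsub y')).aestronglyMeasurable) ?_
    filter_upwards with h
    rw [Real.norm_eq_abs, abs_of_pos (gauss_pos hS _)]
    exact gauss_le hS _
  -- the vector-valued integrand and its integrability
  have normgrad : ∀ x : (EuclideanSpace ℝ (Fin n)), ‖gaussGrad n S x‖ ≤ c * ‖L‖ * ‖x‖ := by
    intro x
    exact gaussGrad_norm_le hS x
  have contv : Continuous (fun h : (EuclideanSpace ℝ (Fin n)) => gaussGrad n S (y - h)) :=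
    (gaussGrad_continuous S).comp (contsub y)
  have hvint : Integrable (fun h => gaussGrad n S (y - h)) μ := by
    refine Integrable.mono' ((integrable_const (c * ‖L‖ * ‖y‖)).add (hmom.const_mul (c * ‖L‖)))
      contv.aestronglyMeasurable ?_
    filter_upwards with h
    calc ‖gaussGrad n S (y - h)‖ ≤ c * ‖L‖ * ‖y - h‖ := normgrad _
      _ ≤ c * ‖L‖ * (‖y‖ + ‖h‖) := by
          have := norm_sub_le y h
          have h0 : 0 ≤ c * ‖L‖ := mul_nonneg hc.le (norm_nonneg _)
          nlinarith
      _ = c * ‖L‖ * ‖y‖ + c * ‖L‖ * ‖h‖ := by ring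
  -- differentiation under the integral sign
  have key : HasFDerivAt (fun y' => ∫ h, g (y' - h) ∂μ)
      (∫ h, (InnerProductSpace.toDual ℝ (EuclideanSpace ℝ (Fin n))) (gaussGrad n S (y - h)) ∂μ) y := by
    refine hasFDerivAt_integral_of_dominated_of_fderiv_le
      (F := fun y' h => g (y' - h))
      (F' := fun y' h => (InnerProductSpace.toDual ℝ (EuclideanSpace ℝ (Fin n))) (gaussGrad n S (y' - h)))
      (bound := fun h => c * ‖L‖ * (1 + ‖y‖) + c * ‖L‖ * ‖h‖)
      (Metric.ball_mem_nhds y one_pos) ?_ (int_g y) ?_ ?_ ?_ ?_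
    · filter_upwards with y' using (contg.comp (contsub y')).aestronglyMeasurable
    · exact ((InnerProductSpace.toDual ℝ (EuclideanSpace ℝ (Fin n))).continuous.comp contv).aestronglyMeasurable
    · filter_upwards with h
      intro y' hy'
      rw [LinearIsometryEquiv.norm_map]
      calc ‖gaussGrad n S (y' - h)‖ ≤ c * ‖L‖ * ‖y' - h‖ := normgrad _
        _ ≤ c * ‖L‖ * (1 + ‖y‖) + c * ‖L‖ * ‖h‖ := by
            have h1 : ‖y' - h‖ ≤ ‖y' - y‖ + ‖y - h‖ := norm_sub_le_norm_sub_add_norm_sub _ _ _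
            have h2 : ‖y' - y‖ ≤ 1 := by
              have := Metric.mem_ball.mp hy'
              rw [dist_eq_norm] at this
              linarith
            have h3 : ‖y - h‖ ≤ ‖y‖ + ‖h‖ := norm_sub_le _ _
            have h0 : 0 ≤ c * ‖L‖ := mul_nonneg hc.le (norm_nonneg _)
            nlinarith
    · exact (integrable_const _).add (hmom.const_mul _)
    · filter_upwards with h
      intro y' _
      have hsub : HasFDerivAt (fun y'' : (EuclideanSpace ℝ (Fin n)) => y'' - h) (ContinuousLinearMap.id ℝ (EuclideanSpace ℝ (Fin n))) y' := by
        simpa using (hasFDerivAt_id y').sub_const h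
      have := (gauss_hasFDerivAt hS (y' - h)).comp y' hsub
      simpa [ContinuousLinearMap.comp_id, Function.comp_def, hgdef] using this
  -- identify the gradient
  have hswap : ∫ h, (InnerProductSpace.toDual ℝ (EuclideanSpace ℝ (Fin n))) (gaussGrad n S (y - h)) ∂μ
      = (InnerProductSpace.toDual ℝ (EuclideanSpace ℝ (Fin n))) (∫ h, gaussGrad n S (y - h) ∂μ) :=
    (InnerProductSpace.toDual ℝ (EuclideanSpace ℝ (Fin n))).toLinearIsometry.integral_comp_comm _
  have hgradAt : HasGradientAt (fun y' => ∫ h, g (y' - h) ∂μ)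
      (∫ h, gaussGrad n S (y - h) ∂μ) y := by
    rw [hasGradientAt_iff_hasFDerivAt, ← hswap]
    exact key
  have hgrad : gradient (fun y' => ∫ h, g (y' - h) ∂μ) y = ∫ h, gaussGrad n S (y - h) ∂μ :=
    hgradAt.gradient
  rw [hgrad]
  -- coordinates of integrals
  set P := ∫ h, g (y - h) ∂μ with hPdef
  have hP : 0 < P := hpy
  have Mint : Integrable (fun h : (EuclideanSpace ℝ (Fin n)) => g (y - h) • h) μ := by
    refine Integrable.mono' (hmom.const_mul c)
      (((contg.comp (contsub y)).smul continuous_id).aestronglyMeasurable) ?_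
    filter_upwards with h
    rw [norm_smul, Real.norm_eq_abs, abs_of_pos (gauss_pos hS _)]
    exact mul_le_mul_of_nonneg_right (gauss_le hS _) (norm_nonneg _)
  have proj_comm : ∀ (f : (EuclideanSpace ℝ (Fin n)) → (EuclideanSpace ℝ (Fin n))) (j : Fin n), Integrable f μ →
      (∫ h, f h ∂μ) j = ∫ h, f h j ∂μ := by
    intro f j hf
    have := (EuclideanSpace.proj (𝕜 := ℝ) j).integral_comp_comm hf
    simpa using this.symm
  have hM : (∫ h, g (y - h) • h ∂μ) i = ∫ h, g (y - h) * h i ∂μ := by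
    rw [proj_comm _ i Mint]
    simp
  have int_ghi : Integrable (fun h => g (y - h) * h i) μ := by
    have := (EuclideanSpace.proj (𝕜 := ℝ) i).integrable_comp Mint
    simpa using this
  have int_vj : ∀ j, Integrable (fun h => -(g (y - h)) * (L (y - h)) j) μ := by
    intro j
    have := (EuclideanSpace.proj (𝕜 := ℝ) j).integrable_comp hvint
    simpa [gaussGrad, hLdef] using this
  have hG : ∀ j, (∫ h, gaussGrad n S (y - h) ∂μ) j = ∫ h, -(g (y - h)) * (L (y - h)) j ∂μ := by
    intro j
    rw [proj_comm _ j hvint]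
    simp [gaussGrad, hLdef, hgdef]
  -- key matrix identity: ∑ j, S i j * (L x) j = x i
  have hSL : ∀ x : (EuclideanSpace ℝ (Fin n)), (∑ j, S i j * (L x) j) = x i := by
    intro x
    have h1 : ∀ j, (L x) j = (S⁻¹.mulVec (fun k => x k)) j := by
      intro j
      rw [hLdef, clm_apply]
      simp [Matrix.mulVec, dotProduct]
    have h2 : (∑ j, S i j * (L x) j) = (S.mulVec (S⁻¹.mulVec (fun k => x k))) i := by
      simp only [h1]
      simp [Matrix.mulVec, dotProduct]
    rw [h2, Matrix.mulVec_mulVec, Matrix.mul_nonsing_inv S (isUnit_iff_ne_zero.mpr hS.det_pos.ne'),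
      Matrix.one_mulVec]
  -- final algebra
  have hsum : ∑ j, S i j * (P⁻¹ * (∫ h, -(g (y - h)) * (L (y - h)) j ∂μ))
      = P⁻¹ * (∫ h, g (y - h) * h i ∂μ - P * y i) := by
    have e1 : ∀ j, S i j * (P⁻¹ * (∫ h, -(g (y - h)) * (L (y - h)) j ∂μ))
        = P⁻¹ * ∫ h, S i j * (-(g (y - h)) * (L (y - h)) j) ∂μ := by
      intro j
      rw [MeasureTheory.integral_const_mul]
      ring
    simp only [e1]
    rw [← Finset.mul_sum, ← MeasureTheory.integral_finset_sum _
      (fun j _ => (int_vj j).const_mul _)]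
    congr 1
    have e2 : ∀ h : (EuclideanSpace ℝ (Fin n)), (∑ j, S i j * (-(g (y - h)) * (L (y - h)) j))
        = g (y - h) * h i - g (y - h) * y i := by
      intro h
      have : (∑ j, S i j * (-(g (y - h)) * (L (y - h)) j))
          = -(g (y - h)) * ∑ j, S i j * (L (y - h)) j := by
        rw [Finset.mul_sum]
        exact Finset.sum_congr rfl fun j _ => by ring
      rw [this, hSL]
      have : (y - h) i = y i - h i := rfl
      rw [this]; ring
    rw [MeasureTheory.integral_congr_ae (Filter.Eventually.of_forall e2),
      MeasureTheory.integral_sub int_ghi ((int_g y).mul_const _),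
      MeasureTheory.integral_mul_const]
  have hLHS : ((P⁻¹ • (∫ h, g (y - h) • h ∂μ)) : (EuclideanSpace ℝ (Fin n))) i = P⁻¹ * ∫ h, g (y - h) * h i ∂μ := by
    rw [PiLp.smul_apply, hM, smul_eq_mul]
  have hRHS : ∀ j, ((P⁻¹ • (∫ h, gaussGrad n S (y - h) ∂μ)) : (EuclideanSpace ℝ (Fin n))) j
      = P⁻¹ * ∫ h, -(g (y - h)) * (L (y - h)) j ∂μ := by
    intro j
    rw [PiLp.smul_apply, hG, smul_eq_mul]
  rw [hLHS]
  simp only [hRHS]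
  rw [hsum]
  field_simp
  ring
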